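/- arXiv:2111.11619 — 2 statements merged into one kernel-verified Lean document; each statement's English description precedes it below -/
import Mathlib

section
/- Fix real numbers $\omega \neq 0$, $\varepsilon$, and $\iota \in \{0, 1\}$. Define, for $(x,y,u,v) \in \mathbb{R}^4$: $N_1 = \omega y + \frac{\varepsilon}{2} v^2$, $F_1 = -\frac{\varepsilon \sin u \; e^y \cos x}{\omega}$, $P_1 = \varepsilon^2 \cos(u + \frac{\iota \pi}{4}) + \varepsilon \sin u \, \sin x \; e^y$, $[P_1] = \varepsilon^2 \cos(u + \frac{\iota \pi}{4})$, and $P_1' = \frac{\varepsilon^2 \, v \cos u \; e^y \cos x}{\omega}$. Then the homological equation $\{N_1, F_1\} + P_1 - [P_1] - P_1' = 0$ holds identically on $\mathbb{R}^4$. -/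
/-! Since `N₁` depends only on `(y, v)`, `{N₁, F₁} = -ω ∂ₓF₁ - ε v ∂ᵤF₁`: the first term cancels
the oscillating part `ε sin u sin x eʸ` of `P₁` and the second is exactly `P₁'`. -/

open Real

noncomputable def poissonBracket (F G : ℝ → ℝ → ℝ → ℝ → ℝ) (x y u v : ℝ) : ℝ :=
  deriv (fun s => F s y u v) x * deriv (fun s => G x s u v) y
    - deriv (fun s => F x s u v) y * deriv (fun s => G s y u v) x
    + deriv (fun s => F x y s v) u * deriv (fun s => G x y u s) v
    - deriv (fun s => F x y u s) v * deriv (fun s => G x y s v) u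

theorem poissonBracket_of_left_indep_xu (H : ℝ → ℝ → ℝ) (G : ℝ → ℝ → ℝ → ℝ → ℝ) (x y u v : ℝ) :
    poissonBracket (fun _ y _ v => H y v) G x y u v =
      -(deriv (fun s => H s v) y * deriv (fun s => G s y u v) x)
        - deriv (fun s => H y s) v * deriv (fun s => G x y s v) u := by
  simp only [poissonBracket, deriv_const]
  ring

theorem poissonBracket_linear_add_sq (ω ε : ℝ) (G : ℝ → ℝ → ℝ → ℝ → ℝ) {x y u v Gx Gu : ℝ}
    (hx : HasDerivAt (fun s => G s y u v) Gx x) (hu : HasDerivAt (fun s => G x y s v) Gu u) :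
    poissonBracket (fun _ y _ v => ω * y + ε / 2 * v ^ 2) G x y u v = -(ω * Gx) - ε * v * Gu := by
  have hy : HasDerivAt (fun s => ω * s + ε / 2 * v ^ 2) ω y := by
    simpa using ((hasDerivAt_id y).const_mul ω).add_const (ε / 2 * v ^ 2)
  have hv : HasDerivAt (fun s => ω * y + ε / 2 * s ^ 2) (ε * v) v :=
    (((hasDerivAt_pow 2 v).const_mul (ε / 2)).const_add (ω * y)).congr_deriv (by norm_num; ring)
  rw [poissonBracket_of_left_indep_xu, hy.deriv, hv.deriv, hx.deriv, hu.deriv]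

theorem homological_equation_example2_general (ω ε : ℝ) (hω : ω ≠ 0)
    (ι : ℝ) :
    ∀ x y u v : ℝ,
      poissonBracket
          (fun _ y _ v => ω * y + ε / 2 * v ^ 2)
          (fun x y u _ => -(ε * Real.sin u * Real.exp y * Real.cos x) / ω) x y u v
        + (ε ^ 2 * Real.cos (u + ι * π / 4) + ε * Real.sin u * Real.sin x * Real.exp y)
        - ε ^ 2 * Real.cos (u + ι * π / 4)
        - (ε ^ 2 * v * Real.cos u * Real.exp y * Real.cos x) / ω = 0 := by
  intro x y u v
  have hx : HasDerivAt (fun s => -(ε * sin u * exp y * cos s) / ω)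
      (-(ε * sin u * exp y * -sin x) / ω) x :=
    (((hasDerivAt_cos x).const_mul (ε * sin u * exp y)).neg).div_const ω
  have hu : HasDerivAt (fun s => -(ε * sin s * exp y * cos x) / ω)
      (-(ε * cos u * exp y * cos x) / ω) u :=
    (((((hasDerivAt_sin u).const_mul ε).mul_const (exp y)).mul_const (cos x)).neg).div_const ω
  rw [poissonBracket_linear_add_sq ω ε _ hx hu]
  field_simp
  ring

/-- The homological equation `{N₁, F₁} + P₁ − [P₁] − P₁' = 0` of Example 4.2. -/
theorem homological_equation_example2 (ω ε : ℝ) (hω : ω ≠ 0)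
    (ι : ℝ) (hι : ι = 0 ∨ ι = 1) :
    ∀ x y u v : ℝ,
      poissonBracket
          (fun _ y _ v => ω * y + ε / 2 * v ^ 2)
          (fun x y u _ => -(ε * Real.sin u * Real.exp y * Real.cos x) / ω) x y u v
        + (ε ^ 2 * Real.cos (u + ι * π / 4) + ε * Real.sin u * Real.sin x * Real.exp y)
        - ε ^ 2 * Real.cos (u + ι * π / 4)
        - (ε ^ 2 * v * Real.cos u * Real.exp y * Real.cos x) / ω = 0 :=
  homological_equation_example2_general ω ε hω ι
end

section
/- Fix real numbers $\omega \neq 0$, $\varepsilon$, $t$, and $\iota \in \{0,1\}$. Define, for $(x,y,u,v) \in \mathbb{R}^4$: $N_1 = \omega y + \frac{\varepsilon}{2} v^2$, $F_1 = -\frac{\varepsilon \sin u \; e^y \cos x}{\omega}$, $P_1 = \varepsilon^2 \cos(u + \frac{\iota \pi}{4}) + \varepsilon \sin u \, \sin x \; e^y$, and $R_t = (1-t)\{N_1, F_1\} + P_1$. Then, identically on $\mathbb{R}^4$, $\{R_t, F_1\} = -\frac{t \, \varepsilon^2 \sin^2 u \; e^{2y}}{\omega} + (1-t) \, \frac{\varepsilon^3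 \cos^2 u \; e^{2y} \cos^2 x}{\omega^2}$. -/
open Real

/-!
Since `F₁` does not depend on `v` and `∂_y F₁ = F₁`, the bracket `{H, F₁}` is
`H_x F₁ - H_y ∂ₓF₁ - H_v ∂ᵤF₁` and involves no `u`-derivative of `H`. Computing `{N₁, F₁}` in
closed form gives the three partial derivatives of `R_t` that enter; in the resulting expression
the terms linear in `v` cancel and `sin² x + cos² x = 1` collapses the rest.
-/

namespace PoissonExample

noncomputable def N₁ (ω ε : ℝ) (_x y _u v : ℝ) : ℝ := ω * y + ε / 2 * v ^ 2

noncomputable def F₁ (ω ε : ℝ) (x y u _v : ℝ) : ℝ := -(ε * sin u * exp y * cos x) / ω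

noncomputable def P₁ (ε ι : ℝ) (x y u _v : ℝ) : ℝ :=
  ε ^ 2 * cos (u + ι * π / 4) + ε * sin u * sin x * exp y

noncomputable def R (ω ε t ι : ℝ) (x y u v : ℝ) : ℝ :=
  (1 - t) * poissonBracket (N₁ ω ε) (F₁ ω ε) x y u v + P₁ ε ι x y u v

variable {ω ε : ℝ}

theorem poissonBracket_F₁ (H : ℝ → ℝ → ℝ → ℝ → ℝ) (x y u v : ℝ) :
    poissonBracket H (F₁ ω ε) x y u v =
      deriv (fun s => H s y u v) x * F₁ ω ε x y u v
        - deriv (fun s => H x s u v) y * (ε * sin u * exp y * sin x / ω)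
        + deriv (fun s => H x y u s) v * (ε * cos u * exp y * cos x / ω) := by
  simp only [poissonBracket, F₁]
  simp (disch := fun_prop) only [deriv.fun_neg', deriv_div_const, deriv_fun_mul, deriv_const',
    Real.deriv_sin, Real.deriv_cos, Real.deriv_exp]
  ring

theorem poissonBracket_N₁_F₁ (hω : ω ≠ 0) (x y u v : ℝ) :
    poissonBracket (N₁ ω ε) (F₁ ω ε) x y u v =
      ε ^ 2 * v * cos u * exp y * cos x / ω - ε * sin u * exp y * sin x := by
  rw [poissonBracket_F₁]
  simp (disch := fun_prop) only [N₁, F₁, deriv_fun_add, deriv_fun_mul, deriv_div_const,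
    deriv_const', deriv_const_mul_id', deriv_id'', deriv_fun_pow]
  field_simp
  ring

section R

variable (t ι : ℝ) (hω : ω ≠ 0) (x y u v : ℝ)
include hω

theorem deriv_R_x :
    deriv (fun s => R ω ε t ι s y u v) x =
      t * ε * sin u * exp y * cos x - (1 - t) * ε ^ 2 * v * cos u * exp y * sin x / ω := by
  simp only [R, poissonBracket_N₁_F₁ hω, P₁]
  simp (disch := fun_prop) only [deriv_fun_add, deriv_fun_sub, deriv_fun_mul, deriv_div_const,
    deriv_const', Real.deriv_sin, Real.deriv_cos]
  ring

theorem deriv_R_y :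
    deriv (fun s => R ω ε t ι x s u v) y =
      (1 - t) * (ε ^ 2 * v * cos u * exp y * cos x / ω - ε * sin u * exp y * sin x)
        + ε * sin u * sin x * exp y := by
  simp only [R, poissonBracket_N₁_F₁ hω, P₁]
  simp (disch := fun_prop) only [deriv_fun_add, deriv_fun_sub, deriv_fun_mul, deriv_div_const,
    deriv_const', Real.deriv_exp]
  ring

theorem deriv_R_v :
    deriv (fun s => R ω ε t ι x y u s) v = (1 - t) * ε ^ 2 * cos u * exp y * cos x / ω := by
  simp only [R, poissonBracket_N₁_F₁ hω, P₁]
  simp (disch := fun_prop) only [deriv_fun_add, deriv_fun_sub, deriv_fun_mul, deriv_div_const,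
    deriv_const', deriv_const_mul_id']
  ring

end R

end PoissonExample

theorem bracket_Rt_F1_example2_general (ω ε t : ℝ) (hω : ω ≠ 0)
    (ι : ℝ) :
    ∀ x y u v : ℝ,
      poissonBracket
          (fun x y u v => (1 - t) *
              poissonBracket
                (fun _ y _ v => ω * y + ε / 2 * v ^ 2)
                (fun x y u _ => -(ε * Real.sin u * Real.exp y * Real.cos x) / ω) x y u v
            + (ε ^ 2 * Real.cos (u + ι * π / 4)
                + ε * Real.sin u * Real.sin x * Real.exp y))
          (fun x y u _ => -(ε * Real.sin u * Real.exp y * Real.cos x) / ω) x y u v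
        = -(t * ε ^ 2 * Real.sin u ^ 2 * Real.exp (2 * y)) / ω
          + (1 - t) * ε ^ 3 * Real.cos u ^ 2 * Real.exp (2 * y) * Real.cos x ^ 2 / ω ^ 2 := by
  intro x y u v
  open PoissonExample in
  · change poissonBracket (R ω ε t ι) (F₁ ω ε) x y u v = _
    rw [poissonBracket_F₁, deriv_R_x t ι hω, deriv_R_y t ι hω, deriv_R_v t ι hω, F₁, two_mul,
      exp_add]
    linear_combination (-(t * ε ^ 2 * sin u ^ 2 * (exp y * exp y)) / ω) * sin_sq_add_cos_sq x

/-- The bracket computation `{R_t, F₁}` of Example 4.2: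
`{R_t, F₁} = −t ε² sin²u e^{2y}/ω + (1−t) ε³ cos²u e^{2y} cos²x / ω²`. -/
theorem bracket_Rt_F1_example2 (ω ε t : ℝ) (hω : ω ≠ 0)
    (ι : ℝ) (hι : ι = 0 ∨ ι = 1) :
    ∀ x y u v : ℝ,
      poissonBracket
          (fun x y u v => (1 - t) *
              poissonBracket
                (fun _ y _ v => ω * y + ε / 2 * v ^ 2)
                (fun x y u _ => -(ε * Real.sin u * Real.exp y * Real.cos x) / ω) x y u v
            + (ε ^ 2 * Real.cos (u + ι * π / 4)
                + ε * Real.sin u * Real.sin x * Real.exp y))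
          (fun x y u _ => -(ε * Real.sin u * Real.exp y * Real.cos x) / ω) x y u v
        = -(t * ε ^ 2 * Real.sin u ^ 2 * Real.exp (2 * y)) / ω
          + (1 - t) * ε ^ 3 * Real.cos u ^ 2 * Real.exp (2 * y) * Real.cos x ^ 2 / ω ^ 2 :=
  bracket_Rt_F1_example2_general ω ε t hω ι
end
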